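/- Let S ⊆ Y be a scrambled set of (Y, F). If x ≠ y are two points of S each having at least one coordinate equal to ∞, then l_x ≠ l_y, where l_x = min{i ≥ 1 : x_i = ∞}. Equivalently, the map ι(x) = l_x is injective on the set of points of S having an infinite coordinate. -/

import Mathlib

/-!
If `l_x = l_y = l`, the orbits of `x` and `y` have infinite coordinates exactly at the indices
`i ≥ l`. The finite coordinates of both orbits grow like `k`, so the `ℕ ∪ {∞}` part of
`D(Fⁿx, Fⁿy)` tends to `0`, while the circle coordinates differ by `x₀ - y₀` plus the partial sums
of `Σ_k Σ_{i<l} 2^{-i} (1/(x_i+k) - 1/(y_i+k))`, a series with terms `O(1/k²)`. Hence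
`D(Fⁿx, Fⁿy)` converges, so its liminf and limsup agree, and `(x, y)` is not scrambled.
-/

open Filter

noncomputable section

instance : Fact ((0:ℝ) < 1) := ⟨one_pos⟩

/-- The unit circle `𝕊 = ℝ/ℤ` (with the metric `d₀(x,y) = min{|x−y|, 1−|x−y|}`). -/
abbrev Circle1 := AddCircle (1 : ℝ)

/-- Points of the product space `Π_{i=0}^∞ X_i = 𝕊 × Π_{i≥1} (ℕ ∪ {∞})`:
the first component is the circle coordinate `x₀`, and the second component gives
the coordinates `x_i ∈ ℕ ∪ {∞}` for `i ≥ 1`. -/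
abbrev Pt := Circle1 × (ℕ+ → ℕ∞)

/-- `1/x` for `x ∈ ℕ ∪ {∞}`, with the convention `1/∞ = 0`. -/
noncomputable def einv (x : ℕ∞) : ℝ := ((x.toNat : ℕ) : ℝ)⁻¹

/-- The metric `d_i(x,y) = |1/x − 1/y|` on `ℕ ∪ {∞}` (for `i ≥ 1`). -/
noncomputable def dE (x y : ℕ∞) : ℝ := |einv x - einv y|

/-- The metric `D(x,y) = Σ_{i=0}^∞ d_i(x_i,y_i)/2^i` on the product space. -/
noncomputable def D (x y : Pt) : ℝ :=
  dist x.1 y.1 + ∑' i : ℕ+, dE (x.2 i) (y.2 i) / 2 ^ (i : ℕ)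

/-- `Y`: the set of points whose sequence of coordinates `(x_i)_{i≥1}` is a nondecreasing
sequence in `ℕ ∪ {∞}` (with `ℕ = {1,2,…}`). -/
def Y : Set Pt := {x | (∀ i, 1 ≤ x.2 i) ∧ Monotone x.2}

/-- The skew-product map `F`: `f₀(x) = (x₀ + Σ_{i≥1} 2^{−i}·(1/x_i)) mod 1` and
`f_i(x) = x_i + 1` for `i ≥ 1`, with `∞ + 1 = ∞`. -/
noncomputable def F (x : Pt) : Pt :=
  (x.1 + (((∑' i : ℕ+, (1 / 2 ^ (i : ℕ)) * einv (x.2 i)) : ℝ) : Circle1),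
   fun i => x.2 i + 1)

/-- `(x, y)` is a scrambled pair of `F`:
`liminf_{n→∞} D(Fⁿ(x), Fⁿ(y)) = 0` and `limsup_{n→∞} D(Fⁿ(x), Fⁿ(y)) > 0`. -/
def ScrambledPair (x y : Pt) : Prop :=
  liminf (fun n : ℕ => D (F^[n] x) (F^[n] y)) atTop = 0 ∧
  0 < limsup (fun n : ℕ => D (F^[n] x) (F^[n] y)) atTop

open Topology

lemma einv_natCast (a : ℕ) : einv a = (a : ℝ)⁻¹ := by simp [einv]

lemma einv_top : einv ⊤ = 0 := by simp [einv]

lemma einv_nonneg (u : ℕ∞) : 0 ≤ einv u := inv_nonneg.mpr (Nat.cast_nonneg _)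

lemma einv_le_one (u : ℕ∞) : einv u ≤ 1 := Nat.cast_inv_le_one _

lemma dE_le_one (u v : ℕ∞) : dE u v ≤ 1 := by
  rw [dE, abs_sub_le_iff]
  constructor <;> linarith [einv_nonneg u, einv_nonneg v, einv_le_one u, einv_le_one v]

lemma tendsto_einv_add_atTop (u : ℕ∞) : Tendsto (fun n : ℕ => einv (u + n)) atTop (𝓝 0) := by
  induction u using ENat.recTopCoe with
  | top => simp [einv_top]
  | coe a =>
    simp only [← Nat.cast_add, einv_natCast]
    exact tendsto_inv_atTop_zero.comp <|
      (tendsto_natCast_atTop_atTop.comp (tendsto_add_atTop_nat a)).congr fun n => by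
        simp [add_comm]

lemma abs_inv_add_sub_inv_add_le (a b k : ℕ) :
    |((a + k + 1 : ℕ) : ℝ)⁻¹ - ((b + k + 1 : ℕ) : ℝ)⁻¹| ≤ |(b : ℝ) - a| / ((k : ℝ) + 1) ^ 2 := by
  have hak : (0 : ℝ) < a + k + 1 := by positivity
  have hbk : (0 : ℝ) < b + k + 1 := by positivity
  have key : ((a + k + 1 : ℕ) : ℝ)⁻¹ - ((b + k + 1 : ℕ) : ℝ)⁻¹
      = ((b : ℝ) - a) / ((a + k + 1) * (b + k + 1)) := by
    push_cast
    field_simp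
    ring
  rw [key, abs_div, abs_of_pos (mul_pos hak hbk)]
  gcongr
  nlinarith [(a.cast_nonneg : (0 : ℝ) ≤ a), (b.cast_nonneg : (0 : ℝ) ≤ b)]

lemma summable_inv_add_sub_inv_add (a b : ℕ) :
    Summable fun k : ℕ => ((a + k : ℕ) : ℝ)⁻¹ - ((b + k : ℕ) : ℝ)⁻¹ := by
  rw [← summable_nat_add_iff 1]
  have hbound : Summable fun k : ℕ => |(b : ℝ) - a| / ((k : ℝ) + 1) ^ 2 := by
    refine (((summable_nat_add_iff 1).mpr
      (Real.summable_one_div_nat_pow.mpr one_lt_two)).mul_left |(b : ℝ) - a|).congr fun k => ?_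
    push_cast
    ring
  refine Summable.of_norm_bounded hbound fun k => ?_
  simpa only [Real.norm_eq_abs, add_assoc] using abs_inv_add_sub_inv_add_le a b k

lemma summable_einv_add_sub_einv_add {u v : ℕ∞} (huv : u = ⊤ ↔ v = ⊤) :
    Summable fun k : ℕ => einv (u + k) - einv (v + k) := by
  induction u using ENat.recTopCoe with
  | top => simp [huv.mp rfl, einv_top]
  | coe a =>
    induction v using ENat.recTopCoe with
    | top => simp at huv
    | coe b =>
      simp only [← Nat.cast_add, einv_natCast]
      exact summable_inv_add_sub_inv_add a b

def circleShift (x : Pt) : ℝ := ∑' i : ℕ+, (1 / 2 ^ (i : ℕ)) * einv (x.2 i)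

lemma snd_iterate_F (x : Pt) (n : ℕ) (i : ℕ+) : (F^[n] x).2 i = x.2 i + n := by
  induction n with
  | zero => simp
  | succ n ih =>
    simp [Function.iterate_succ_apply', F, ih, add_assoc]

lemma fst_iterate_F (x : Pt) (n : ℕ) :
    (F^[n] x).1 = x.1 + ((∑ k ∈ Finset.range n, circleShift (F^[k] x) : ℝ) : Circle1) := by
  induction n with
  | zero => simp
  | succ n ih =>
    rw [Function.iterate_succ_apply', F, ih, Finset.sum_range_succ, AddCircle.coe_add, add_assoc]
    rfl

lemma summable_one_div_two_pow_pnat : Summable fun i : ℕ+ => (1 : ℝ) / 2 ^ (i : ℕ) := by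
  simpa only [one_div_pow, Function.comp_def] using
    summable_geometric_two.comp_injective PNat.coe_injective

lemma tendsto_tsum_dE_iterate_F (x y : Pt) :
    Tendsto (fun n => ∑' i : ℕ+, dE ((F^[n] x).2 i) ((F^[n] y).2 i) / 2 ^ (i : ℕ))
      atTop (𝓝 0) := by
  have hlim (i : ℕ+) : Tendsto (fun n => dE ((F^[n] x).2 i) ((F^[n] y).2 i) / 2 ^ (i : ℕ))
      atTop (𝓝 0) := by
    simp only [snd_iterate_F, dE]
    simpa using ((tendsto_einv_add_atTop (x.2 i)).sub
      (tendsto_einv_add_atTop (y.2 i))).abs.div_const (2 ^ (i : ℕ))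
  have hbound (n : ℕ) (i : ℕ+) :
      ‖dE ((F^[n] x).2 i) ((F^[n] y).2 i) / 2 ^ (i : ℕ)‖ ≤ 1 / 2 ^ (i : ℕ) := by
    rw [Real.norm_of_nonneg (by unfold dE; positivity)]
    gcongr
    exact dE_le_one _ _
  simpa using tendsto_tsum_of_dominated_convergence summable_one_div_two_pow_pnat hlim
    (Eventually.of_forall hbound)

lemma circleShift_eq_sum {x : Pt} {s : Finset ℕ+} (hs : ∀ i ∉ s, x.2 i = ⊤) :
    circleShift x = ∑ i ∈ s, (1 / 2 ^ (i : ℕ)) * einv (x.2 i) :=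
  tsum_eq_sum fun i hi => by simp [hs i hi, einv_top]

lemma summable_circleShift_iterate_sub {x y : Pt} {s : Finset ℕ+} (hs : ∀ i ∉ s, x.2 i = ⊤)
    (hxy : ∀ i, x.2 i = ⊤ ↔ y.2 i = ⊤) :
    Summable fun k => circleShift (F^[k] x) - circleShift (F^[k] y) := by
  have hxs (k : ℕ) : ∀ i ∉ s, (F^[k] x).2 i = ⊤ := fun i hi => by simp [snd_iterate_F, hs i hi]
  have hys (k : ℕ) : ∀ i ∉ s, (F^[k] y).2 i = ⊤ := fun i hi => by
    simp [snd_iterate_F, (hxy i).mp (hs i hi)]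
  refine (summable_sum (s := s) fun i _ =>
    (summable_einv_add_sub_einv_add (hxy i)).mul_left (1 / 2 ^ (i : ℕ))).congr fun k => ?_
  rw [circleShift_eq_sum (hxs k), circleShift_eq_sum (hys k), ← Finset.sum_sub_distrib]
  simp only [snd_iterate_F, mul_sub]

lemma tendsto_dist_fst_iterate_F {x y : Pt}
    (h : Summable fun k => circleShift (F^[k] x) - circleShift (F^[k] y)) :
    Tendsto (fun n => dist (F^[n] x).1 (F^[n] y).1) atTop
      (𝓝 ‖x.1 - y.1 + ((∑' k, (circleShift (F^[k] x) - circleShift (F^[k] y)) : ℝ) : Circle1)‖) := by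
  have hsub (n : ℕ) : (F^[n] x).1 - (F^[n] y).1 = x.1 - y.1 +
      ((∑ k ∈ Finset.range n, (circleShift (F^[k] x) - circleShift (F^[k] y)) : ℝ) : Circle1) := by
    rw [fst_iterate_F, fst_iterate_F, Finset.sum_sub_distrib, AddCircle.coe_sub]
    abel
  simp only [dist_eq_norm, hsub]
  exact (tendsto_const_nhds.add
    (((AddCircle.continuous_mk' 1).tendsto _).comp h.hasSum.tendsto_sum_nat)).norm

lemma exists_tendsto_D_iterate_F {x y : Pt} {s : Finset ℕ+} (hs : ∀ i ∉ s, x.2 i = ⊤)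
    (hxy : ∀ i, x.2 i = ⊤ ↔ y.2 i = ⊤) :
    ∃ L, Tendsto (fun n => D (F^[n] x) (F^[n] y)) atTop (𝓝 L) :=
  ⟨_, (tendsto_dist_fst_iterate_F (summable_circleShift_iterate_sub hs hxy)).add
    (tendsto_tsum_dE_iterate_F x y)⟩

lemma ScrambledPair.not_tendsto {x y : Pt} (h : ScrambledPair x y) (L : ℝ) :
    ¬ Tendsto (fun n => D (F^[n] x) (F^[n] y)) atTop (𝓝 L) := fun hL => by
  have hpos := h.2
  rw [hL.limsup_eq, ← hL.liminf_eq, h.1] at hpos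
  exact hpos.false

lemma Monotone.eq_top_iff_le {ι α : Type*} [LinearOrder ι] [PartialOrder α] [OrderTop α]
    {f : ι → α} (hf : Monotone f) {l : ι} (hl : f l = ⊤) (hlt : ∀ i < l, f i ≠ ⊤) (i : ι) :
    f i = ⊤ ↔ l ≤ i :=
  ⟨fun hi => not_lt.mp fun h => hlt i h hi, fun h => top_le_iff.mp (hl ▸ hf h)⟩

/-- Let `S ⊆ Y` be a scrambled set of `(Y, F)`. If `x ≠ y` are two points of `S` each having
at least one coordinate equal to `∞`, then `l_x ≠ l_y`, where `l_x = min{i ≥ 1 : x_i = ∞}`;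
equivalently, `x ↦ l_x` is injective on the points of `S` having an infinite coordinate. -/
theorem first_infinite_index_injective_on_scrambled_set
    (S : Set Pt) (hS : S ⊆ Y)
    (hscr : ∀ x ∈ S, ∀ y ∈ S, x ≠ y → ScrambledPair x y)
    (x y : Pt) (hxS : x ∈ S) (hyS : y ∈ S) (hxy : x ≠ y)
    (lx ly : ℕ+)
    (hlx : x.2 lx = ⊤ ∧ ∀ i : ℕ+, i < lx → x.2 i ≠ ⊤)
    (hly : y.2 ly = ⊤ ∧ ∀ i : ℕ+, i < ly → y.2 i ≠ ⊤) :
    lx ≠ ly := by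
  rintro rfl
  have hx := (hS hxS).2.eq_top_iff_le hlx.1 hlx.2
  have hy := (hS hyS).2.eq_top_iff_le hly.1 hly.2
  obtain ⟨L, hL⟩ := exists_tendsto_D_iterate_F (s := Finset.Iio lx)
    (fun i hi => (hx i).mpr (by simpa using hi)) fun i => (hx i).trans (hy i).symm
  exact (hscr x hxS y hyS hxy).not_tendsto L hL
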